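/- arXiv:2402.15834 — 2 statements merged into one kernel-verified Lean document; each statement's English description precedes it below -/
import Mathlib

section
/- Let k be a nonnegative integer, let G be a finite simple graph, let 𝒯 = (T, {X_t}) be a tree decomposition of G with μ(𝒯) ≤ k, let t be a node of T, and let F ⊆ V(G) be a maximal induced forest in G. Let S′ be any set consisting of all vertices of degree at least 2 in G[F] together with exactly one vertex chosen from each connected component of G[F] having exactly two vertices. Then |S′ ∩ X_t| ≤ 8k. -/
open SimpleGraph

namespace Paper

/-- A tree decomposition of a graph `G`. -/
structure TreeDecomp {V : Type} (G : SimpleGraph V) where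
  ι : Type
  fin : Fintype ι
  tree : SimpleGraph ι
  isTree : tree.IsTree
  bag : ι → Set V
  mem_bag : ∀ v : V, ∃ t, v ∈ bag t
  edge_bag : ∀ ⦃u w : V⦄, G.Adj u w → ∃ t, u ∈ bag t ∧ w ∈ bag t
  coherent : ∀ v : V, (tree.induce {t | v ∈ bag t}).Connected

/-- `M` is an induced matching in `G`: a set of edges, pairwise disjoint,
with no edge of `G` joining endpoints of distinct edges of `M`. -/
def IsInducedMatching {V : Type} (G : SimpleGraph V) (M : Finset (V × V)) : Prop :=
  (∀ p ∈ M, G.Adj p.1 p.2) ∧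
    ∀ p ∈ M, ∀ q ∈ M, p ≠ q →
      (p.1 ≠ q.1 ∧ p.1 ≠ q.2 ∧ p.2 ≠ q.1 ∧ p.2 ≠ q.2) ∧
      (¬ G.Adj p.1 q.1 ∧ ¬ G.Adj p.1 q.2 ∧ ¬ G.Adj p.2 q.1 ∧ ¬ G.Adj p.2 q.2)

/-- Every edge of `M` has an endpoint in `X`. -/
def Touches {V : Type} (M : Finset (V × V)) (X : Set V) : Prop :=
  ∀ p ∈ M, p.1 ∈ X ∨ p.2 ∈ X

/-- μ(𝒯): the maximum size of an induced matching of `G` all of whose edges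
touch a common bag of the tree decomposition `D`. -/
noncomputable def mu {V : Type} (G : SimpleGraph V) (D : TreeDecomp G) : ℕ :=
  sSup {n | ∃ (t : D.ι) (M : Finset (V × V)),
    IsInducedMatching G M ∧ Touches M (D.bag t) ∧ M.card = n}

/-- Induced matching treewidth: minimum of μ(𝒯) over tree decompositions. -/
noncomputable def treeMu {V : Type} (G : SimpleGraph V) : ℕ :=
  sInf {n | ∃ D : TreeDecomp G, mu G D = n}

/-- `S` is an independent set of `G`. -/
def IsIndepSet {V : Type} (G : SimpleGraph V) (S : Finset V) : Prop :=
  ∀ u ∈ S, ∀ v ∈ S, u ≠ v → ¬ G.Adj u v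

/-- α(𝒯): the maximum size of an independent set of `G` contained in a bag. -/
noncomputable def alphaTD {V : Type} (G : SimpleGraph V) (D : TreeDecomp G) : ℕ :=
  sSup {n | ∃ (t : D.ι) (S : Finset V),
    IsIndepSet G S ∧ ↑S ⊆ D.bag t ∧ S.card = n}

/-- Tree-independence number: minimum of α(𝒯) over tree decompositions. -/
noncomputable def treeAlpha {V : Type} (G : SimpleGraph V) : ℕ :=
  sInf {n | ∃ D : TreeDecomp G, alphaTD G D = n}

/-- The `k`-th power of `G`: distinct vertices adjacent iff their distance in `G`
is at most `k` (for `k = 0` this is the edgeless graph). -/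
def power {V : Type} (G : SimpleGraph V) (k : ℕ) : SimpleGraph V :=
  SimpleGraph.fromRel (fun u v => G.Reachable u v ∧ G.dist u v ≤ k)

/-- The graph `G°[ℋ]` for a family `ℋ = {H j}` of subgraphs of `G`: vertices are
indices `j`, two distinct indices adjacent iff the subgraphs share a vertex or
there is an edge of `G` between them. -/
def blowup {V J : Type} (G : SimpleGraph V) (H : J → G.Subgraph) : SimpleGraph J :=
  SimpleGraph.fromRel (fun i j =>
    ((H i).verts ∩ (H j).verts).Nonempty ∨
      ∃ u ∈ (H i).verts, ∃ v ∈ (H j).verts, G.Adj u v)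


section ForestLemma



variable {W : Type} {H : SimpleGraph W}

private lemma dist_le_adj {u w r : W} (ha : H.Adj u w) (h : H.Reachable w r) :
    H.dist u r ≤ H.dist w r + 1 := by
  obtain ⟨p, hp⟩ := h.exists_walk_length_eq_dist
  simpa [hp] using SimpleGraph.dist_le (Walk.cons ha p)

private lemma adj_dist_ne (hac : H.IsAcyclic) {v w r : W} (ha : H.Adj v w)
    (hr : H.Reachable v r) : H.dist v r ≠ H.dist w r := by
  classical
  intro hEq
  have hrw : H.Reachable w r := (ha.symm.reachable).trans hr
  obtain ⟨p, hp, hl⟩ := hrw.exists_path_of_dist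
  by_cases hv : v ∈ p.support
  · have hdrop : H.dist v r ≤ (p.dropUntil v hv).length := SimpleGraph.dist_le _
    have hsum : (p.takeUntil v hv).length + (p.dropUntil v hv).length = p.length := by
      have := congr_arg Walk.length (p.take_spec hv)
      rwa [Walk.length_append] at this
    have ht : (p.takeUntil v hv).length ≠ 0 := fun h0 =>
      ha.ne (Walk.eq_of_length_eq_zero h0).symm
    omega
  · obtain ⟨q, hq, hlq⟩ := hr.exists_path_of_dist
    have hQ : (Walk.cons ha p).IsPath := hp.cons hv
    have heq := hac.path_unique ⟨Walk.cons ha p, hQ⟩ ⟨q, hq⟩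
    have hlen : (Walk.cons ha p).length = q.length := congrArg (fun x : H.Path v r => x.1.length) heq
    simp only [Walk.length_cons] at hlen
    omega

private lemma down_unique (hac : H.IsAcyclic) {v w1 w2 r : W} (h1 : H.Adj v w1)
    (h2 : H.Adj v w2) (hr : H.Reachable v r)
    (hd1 : H.dist w1 r + 1 = H.dist v r) (hd2 : H.dist w2 r + 1 = H.dist v r) :
    w1 = w2 := by
  classical
  by_contra hne
  have hr1 : H.Reachable w1 r := (h1.symm.reachable).trans hr
  have hr2 : H.Reachable w2 r := (h2.symm.reachable).trans hr
  obtain ⟨p1, hp1, hl1⟩ := hr1.exists_path_of_dist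
  obtain ⟨p2, hp2, hl2⟩ := hr2.exists_path_of_dist
  have hv1 : v ∉ p1.support := by
    intro hv
    have : H.dist v r ≤ (p1.dropUntil v hv).length := SimpleGraph.dist_le _
    have := p1.length_dropUntil_le hv
    omega
  have hv2 : v ∉ p2.support := by
    intro hv
    have : H.dist v r ≤ (p2.dropUntil v hv).length := SimpleGraph.dist_le _
    have := p2.length_dropUntil_le hv
    omega
  have hQ1 : (Walk.cons h1 p1).IsPath := hp1.cons hv1
  have hQ2 : (Walk.cons h2 p2).IsPath := hp2.cons hv2
  have heq := hac.path_unique ⟨Walk.cons h1 p1, hQ1⟩ ⟨Walk.cons h2 p2, hQ2⟩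
  have hsupp : (Walk.cons h1 p1).support = (Walk.cons h2 p2).support :=
    congrArg (fun x : H.Path v r => x.1.support) heq
  rw [Walk.support_cons, Walk.support_cons, p1.support_eq_cons, p2.support_eq_cons] at hsupp
  simp only [List.cons.injEq] at hsupp
  exact hne hsupp.2.1


/-- a root for each connected component -/
noncomputable def rt (H : SimpleGraph W) (K : H.ConnectedComponent) : W :=
  K.exists_rep.choose

lemma rt_spec (H : SimpleGraph W) (K : H.ConnectedComponent) :
    H.connectedComponentMk (rt H K) = K :=
  K.exists_rep.choose_spec

/-- depth of a vertex: distance to the root of its component -/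
noncomputable def dep (H : SimpleGraph W) (v : W) : ℕ :=
  H.dist v (rt H (H.connectedComponentMk v))

lemma reach_rt (v : W) : H.Reachable v (rt H (H.connectedComponentMk v)) :=
  (ConnectedComponent.eq.mp (rt_spec H (H.connectedComponentMk v))).symm

lemma rt_eq_of_adj {u v : W} (ha : H.Adj u v) :
    rt H (H.connectedComponentMk u) = rt H (H.connectedComponentMk v) := by
  rw [ConnectedComponent.connectedComponentMk_eq_of_adj ha]

lemma dep_le_adj {u v : W} (ha : H.Adj u v) : dep H u ≤ dep H v + 1 := by
  unfold dep
  rw [rt_eq_of_adj ha]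
  exact dist_le_adj ha (reach_rt v)

lemma dep_ne_adj (hac : H.IsAcyclic) {u v : W} (ha : H.Adj u v) : dep H u ≠ dep H v := by
  unfold dep
  rw [rt_eq_of_adj ha]
  exact adj_dist_ne hac ha (ha.reachable.trans (reach_rt v))

/-- adjacent vertices have depths differing by exactly one -/
lemma dep_adj_cases (hac : H.IsAcyclic) {u v : W} (ha : H.Adj u v) :
    dep H v = dep H u + 1 ∨ dep H v + 1 = dep H u := by
  have h1 := dep_le_adj ha
  have h2 := dep_le_adj ha.symm
  have h3 := dep_ne_adj hac ha
  omega

/-- the down-neighbor is unique -/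
lemma dep_down_unique (hac : H.IsAcyclic) {v w1 w2 : W} (h1 : H.Adj v w1) (h2 : H.Adj v w2)
    (hd1 : dep H w1 + 1 = dep H v) (hd2 : dep H w2 + 1 = dep H v) : w1 = w2 := by
  unfold dep at hd1 hd2
  rw [← rt_eq_of_adj h1] at hd1
  rw [← rt_eq_of_adj h2] at hd2
  exact down_unique hac h1 h2 (reach_rt v) hd1 hd2

open Classical in
/-- the parent of a vertex (junk value `v` if no down-neighbor) -/
noncomputable def par (H : SimpleGraph W) (v : W) : W :=
  if h : ∃ w, H.Adj v w ∧ dep H w + 1 = dep H v then h.choose else v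

lemma par_eq (hac : H.IsAcyclic) {v w : W} (ha : H.Adj v w) (hd : dep H w + 1 = dep H v) :
    par H v = w := by
  have h : ∃ w, H.Adj v w ∧ dep H w + 1 = dep H v := ⟨w, ha, hd⟩
  unfold par
  rw [dif_pos h]
  exact dep_down_unique hac h.choose_spec.1 ha h.choose_spec.2 hd

lemma neighborSet_subset_supp (v : W) :
    H.neighborSet v ⊆ (H.connectedComponentMk v).supp := by
  intro w hw
  exact ConnectedComponent.connectedComponentMk_eq_of_adj ((H.mem_neighborSet v w).mp hw).symm

lemma supp_ncard_ge_three [Finite W] {v : W} (hdeg : 2 ≤ (H.neighborSet v).ncard) :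
    3 ≤ (H.connectedComponentMk v).supp.ncard := by
  have hsub : insert v (H.neighborSet v) ⊆ (H.connectedComponentMk v).supp := by
    rw [Set.insert_subset_iff]
    exact ⟨rfl, neighborSet_subset_supp v⟩
  have hvn : v ∉ H.neighborSet v := fun h => H.irrefl ((H.mem_neighborSet v v).mp h)
  have : (insert v (H.neighborSet v)).ncard = (H.neighborSet v).ncard + 1 :=
    Set.ncard_insert_of_notMem hvn (Set.toFinite _)
  have hle := Set.ncard_le_ncard hsub (Set.toFinite _)
  omega

/-- in a component with exactly two vertices, the two vertices are adjacent -/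
lemma two_comp_adj [Finite W] {v : W}
    (h2 : (H.connectedComponentMk v).supp.ncard = 2) :
    ∃ u, H.Adj v u ∧ (H.connectedComponentMk v).supp = {v, u} := by
  classical
  obtain ⟨a, b, hab, hsupp⟩ := Set.ncard_eq_two.mp h2
  have hv : v ∈ (H.connectedComponentMk v).supp := rfl
  rw [hsupp] at hv
  -- wlog supp = {v, u}
  obtain ⟨u, hu, hset⟩ : ∃ u, u ≠ v ∧ (H.connectedComponentMk v).supp = {v, u} := by
    rcases hv with h | h
    · subst h; exact ⟨b, hab.symm, by rw [hsupp]⟩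
    · subst h; exact ⟨a, hab, by rw [hsupp, Set.pair_comm]⟩
  have hru : H.Reachable v u := by
    have : u ∈ (H.connectedComponentMk v).supp := by rw [hset]; right; rfl
    exact (ConnectedComponent.eq.mp this).symm
  obtain ⟨p, hp, hl⟩ := hru.exists_path_of_dist
  have hsub : ∀ x ∈ p.support, x ∈ ({v, u} : Set W) := by
    intro x hx
    have : H.Reachable v x := ⟨p.takeUntil x hx⟩
    rw [← hset]
    exact (ConnectedComponent.eq.mpr this).symm
  have hnodup := hp.support_nodup
  have hlen2 : p.support.length ≤ 2 := by
    have h1 : p.support.toFinset ⊆ {v, u} := by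
      intro x hx
      have := hsub x (List.mem_toFinset.mp hx)
      simpa using this
    have h2 := Finset.card_le_card h1
    have h3 : p.support.toFinset.card = p.support.length := List.toFinset_card_of_nodup hnodup
    have h4 : ({v, u} : Finset W).card ≤ 2 := Finset.card_insert_le _ _ |>.trans (by simp)
    omega
  have hlsup : p.support.length = p.length + 1 := Walk.length_support p
  have hne : p.length ≠ 0 := fun h0 => hu (Walk.eq_of_length_eq_zero h0).symm
  have : p.length = 1 := by omega
  exact ⟨u, p.adj_of_length_eq_one this, hset⟩


/-- compatibility of two edges for an induced matching -/
def Compat (H : SimpleGraph W) (p q : W × W) : Prop :=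
  (p.1 ≠ q.1 ∧ p.1 ≠ q.2 ∧ p.2 ≠ q.1 ∧ p.2 ≠ q.2) ∧
    (¬H.Adj p.1 q.1 ∧ ¬H.Adj p.1 q.2 ∧ ¬H.Adj p.2 q.1 ∧ ¬H.Adj p.2 q.2)

lemma Compat.symm {p q : W × W} (h : Compat H p q) : Compat H q p :=
  ⟨⟨h.1.1.symm, h.1.2.2.1.symm, h.1.2.1.symm, h.1.2.2.2.symm⟩,
   ⟨fun a => h.2.1 a.symm, fun a => h.2.2.2.1 a.symm,
    fun a => h.2.2.1 a.symm, fun a => h.2.2.2.2 a.symm⟩⟩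

lemma compat_A_A (hac : H.IsAcyclic) {v c a b : W} (hvc : H.Adj v c) (hab : H.Adj a b)
    (hdc : dep H v < dep H c) (hdb : dep H a < dep H b) (hda : dep H a ≤ dep H v)
    (hav : a ≠ v) (hap : a ≠ par H v) (happ : a ≠ par H (par H v)) :
    Compat H (v, c) (a, b) := by
  have hdc' : dep H c = dep H v + 1 := by rcases dep_adj_cases hac hvc with h | h <;> omega
  have hdb' : dep H b = dep H a + 1 := by rcases dep_adj_cases hac hab with h | h <;> omega
  unfold Compat
  dsimp only
  refine ⟨⟨fun h => hav h.symm, ?_, fun h => by rw [← h] at hda; omega, ?_⟩, ?_, ?_, ?_, ?_⟩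
  · -- v ≠ b
    intro h
    subst h
    exact hap ((par_eq hac hab.symm (by omega)).symm)
  · -- c ≠ b
    intro h
    subst h
    exact hav (dep_down_unique hac hab.symm hvc.symm (by omega) (by omega))
  · -- ¬ Adj v a
    intro h
    rcases dep_adj_cases hac h with h' | h'
    · omega
    · exact hap ((par_eq hac h h').symm)
  · -- ¬ Adj v b
    intro h
    rcases dep_adj_cases hac h with h' | h'
    · exact hav (dep_down_unique hac h.symm hab.symm (by omega) (by omega)).symm
    · have hb : par H v = b := par_eq hac h h'
      have ha2 : par H b = a := par_eq hac hab.symm (by omega)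
      exact happ (by rw [hb, ha2])
  · -- ¬ Adj c a
    intro h
    rcases dep_adj_cases hac h with h' | h'
    · omega
    · exact hav (dep_down_unique hac h hvc.symm h' (by omega))
  · -- ¬ Adj c b
    intro h
    rcases dep_adj_cases hac h with h' | h'
    · omega
    · have hbv : b = v := dep_down_unique hac h hvc.symm h' (by omega)
      subst hbv
      exact hap ((par_eq hac hab.symm (by omega)).symm)

lemma compat_of_comp_ne {v c a b : W} (hvc : H.Adj v c) (hab : H.Adj a b)
    (hne : H.connectedComponentMk v ≠ H.connectedComponentMk a) : Compat H (v, c) (a, b) := by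
  have hca : H.connectedComponentMk c = H.connectedComponentMk v :=
    (ConnectedComponent.connectedComponentMk_eq_of_adj hvc).symm
  have hba : H.connectedComponentMk b = H.connectedComponentMk a :=
    (ConnectedComponent.connectedComponentMk_eq_of_adj hab).symm
  unfold Compat
  dsimp only
  refine ⟨⟨?_, ?_, ?_, ?_⟩, ?_, ?_, ?_, ?_⟩
  · intro h; exact hne (congrArg _ h)
  · intro h; rw [← hba] at hne; exact hne (congrArg _ h)
  · intro h; rw [← hca] at hne; exact hne (congrArg _ h)
  · intro h; rw [← hca, ← hba] at hne; exact hne (congrArg _ h)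
  · intro h; exact hne (ConnectedComponent.connectedComponentMk_eq_of_adj h)
  · intro h; rw [← hba] at hne; exact hne (ConnectedComponent.connectedComponentMk_eq_of_adj h)
  · intro h; rw [← hca] at hne; exact hne (ConnectedComponent.connectedComponentMk_eq_of_adj h)
  · intro h
    rw [← hca, ← hba] at hne; exact hne (ConnectedComponent.connectedComponentMk_eq_of_adj h)

lemma compat_A_B [Finite W] {v c a b : W} (hvc : H.Adj v c) (hab : H.Adj a b)
    (hdeg : 2 ≤ (H.neighborSet v).ncard)
    (hsupp : (H.connectedComponentMk a).supp = {a, b}) : Compat H (v, c) (a, b) := by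
  apply compat_of_comp_ne hvc hab
  intro h
  have h3 := supp_ncard_ge_three hdeg
  rw [h, hsupp] at h3
  have : ({a, b} : Set W).ncard ≤ 2 := by
    refine le_trans (Set.ncard_insert_le _ _) ?_
    simp
  omega

lemma compat_B_any {v u a b : W} (hvu : H.Adj v u) (hab : H.Adj a b)
    (hsupp : (H.connectedComponentMk v).supp = {v, u}) (hva : v ≠ a) (hua : u ≠ a) :
    Compat H (v, u) (a, b) := by
  apply compat_of_comp_ne hvu hab
  intro h
  have ha : a ∈ (H.connectedComponentMk v).supp := by rw [h]; rfl
  rw [hsupp] at ha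
  rcases ha with h' | h'
  · exact hva h'.symm
  · exact hua h'.symm


lemma forest_main [Finite W] (hac : H.IsAcyclic) :
    ∀ (n : ℕ) (S : Set W), S.ncard = n →
    (∀ v ∈ S, 2 ≤ (H.neighborSet v).ncard ∨
      ((H.connectedComponentMk v).supp.ncard = 2 ∧
        ∀ u ∈ (H.connectedComponentMk v).supp, u ∈ S → u = v)) →
    ∃ M : Finset (W × W), (∀ p ∈ M, H.Adj p.1 p.2) ∧
      (∀ p ∈ M, ∀ q ∈ M, p ≠ q → Compat H p q) ∧
      (∀ p ∈ M, p.1 ∈ S ∧ (dep H p.1 < dep H p.2 ∨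
        (H.connectedComponentMk p.1).supp = {p.1, p.2})) ∧
      S.ncard ≤ 3 * M.card := by
  intro n
  induction n using Nat.strong_induction_on with
  | _ n ih =>
  intro S hn hS
  classical
  rcases Set.eq_empty_or_nonempty S with hempty | hne
  · exact ⟨∅, by simp, by simp, by simp, by simp [hempty]⟩
  obtain ⟨v, hvS, hmax⟩ :=
    Finset.exists_max_image (Set.toFinite S).toFinset (dep H)
      (by rwa [Set.Finite.toFinset_nonempty])
  rw [Set.Finite.mem_toFinset] at hvS
  have hmax' : ∀ u ∈ S, dep H u ≤ dep H v := fun u hu =>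
    hmax u ((Set.Finite.mem_toFinset _).mpr hu)
  set T : Set W := {v, par H v, par H (par H v)} with hT
  have hvT : v ∈ T := Or.inl rfl
  have hcardT : (S ∩ T).ncard ≤ 3 := by
    refine le_trans (Set.ncard_le_ncard Set.inter_subset_right (Set.toFinite _)) ?_
    refine le_trans (Set.ncard_insert_le _ _) ?_
    refine Nat.add_le_add_right ?_ 1
    exact le_trans (Set.ncard_insert_le _ _) (by simp)
  have hsplit : (S ∩ T).ncard + (S \ T).ncard = S.ncard :=
    Set.ncard_inter_add_ncard_diff_eq_ncard S T (Set.toFinite _)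
  have hvD : v ∉ S \ T := fun h => h.2 hvT
  have hlt : (S \ T).ncard < n := by
    rw [← hn]
    exact Set.ncard_lt_ncard ⟨Set.diff_subset, fun h => hvD (h hvS)⟩ (Set.toFinite _)
  obtain ⟨M', hM1, hM2, hM3, hM4⟩ := ih _ hlt (S \ T) rfl (fun w hw => by
    rcases hS w hw.1 with h | h
    · exact Or.inl h
    · exact Or.inr ⟨h.1, fun u hu hu2 => h.2 u hu hu2.1⟩)
  -- pick the new edge e
  have key : ∃ e : W × W, e.1 = v ∧ H.Adj e.1 e.2 ∧
      (dep H e.1 < dep H e.2 ∨ (H.connectedComponentMk e.1).supp = {e.1, e.2}) ∧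
      (∀ q ∈ M', Compat H e q) := by
    rcases hS v hvS with hdeg | ⟨h2, huniq⟩
    · -- case A : degree at least two
      obtain ⟨c, hvc, hdc⟩ : ∃ c, H.Adj v c ∧ dep H v < dep H c := by
        obtain ⟨w1, hw1, w2, hw2, hww⟩ :=
          (Set.one_lt_ncard (Set.toFinite _)).mp (by omega : 1 < (H.neighborSet v).ncard)
        rw [SimpleGraph.mem_neighborSet] at hw1 hw2
        rcases dep_adj_cases hac hw1 with h1 | h1
        · exact ⟨w1, hw1, by omega⟩
        · rcases dep_adj_cases hac hw2 with h2 | h2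
          · exact ⟨w2, hw2, by omega⟩
          · exact absurd (dep_down_unique hac hw1 hw2 h1 h2) hww
      refine ⟨(v, c), rfl, hvc, Or.inl hdc, fun q hq => ?_⟩
      obtain ⟨⟨hq1, hqT⟩, hqgood⟩ := hM3 q hq
      have hqv : q.1 ≠ v := fun h => hqT (h ▸ hvT)
      have hqp : q.1 ≠ par H v := fun h => hqT (Or.inr (Or.inl h))
      have hqpp : q.1 ≠ par H (par H v) := fun h => hqT (Or.inr (Or.inr h))
      have hqd : dep H q.1 ≤ dep H v := hmax' q.1 hq1
      have hqadj : H.Adj q.1 q.2 := hM1 q hq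
      rcases hqgood with hg | hg
      · exact compat_A_A hac hvc hqadj hdc hg hqd hqv hqp hqpp
      · exact compat_A_B hvc hqadj hdeg hg
    · -- case B : two-vertex component
      obtain ⟨u, hvu, hset⟩ := two_comp_adj h2
      refine ⟨(v, u), rfl, hvu, Or.inr hset, fun q hq => ?_⟩
      obtain ⟨⟨hq1, hqT⟩, _⟩ := hM3 q hq
      have hqv : v ≠ q.1 := fun h => hqT (h ▸ hvT)
      have hqu : u ≠ q.1 := by
        intro h
        have hu : u ∈ (H.connectedComponentMk v).supp := by rw [hset]; right; rfl
        exact hqv ((huniq u hu (h ▸ hq1)).symm.trans h)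
      exact compat_B_any hvu (hM1 q hq) hset hqv hqu
  obtain ⟨e, he1, he2, he3, he4⟩ := key
  have heM : e ∉ M' := fun h => ((hM3 e h).1.2) (he1 ▸ hvT)
  refine ⟨insert e M', ?_, ?_, ?_, ?_⟩
  · intro p hp
    rcases Finset.mem_insert.mp hp with h | h
    · subst h; exact he2
    · exact hM1 p h
  · intro p hp q hq hpq
    rcases Finset.mem_insert.mp hp with h | h <;> rcases Finset.mem_insert.mp hq with h' | h'
    · exact absurd (h.trans h'.symm) hpq
    · subst h; exact he4 q h'
    · subst h'; exact (he4 p h).symm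
    · exact hM2 p h q h' hpq
  · intro p hp
    rcases Finset.mem_insert.mp hp with h | h
    · subst h; exact ⟨he1 ▸ hvS, he3⟩
    · exact ⟨(hM3 p h).1.1, (hM3 p h).2⟩
  · rw [Finset.card_insert_of_notMem heM]
    omega


end ForestLemma

/-- `F` induces a forest in `G` and is inclusion-wise maximal with this property. -/
def IsMaximalInducedForest {V : Type} (G : SimpleGraph V) (F : Set V) : Prop :=
  (G.induce F).IsAcyclic ∧
    ∀ F' : Set V, F ⊆ F' → (G.induce F').IsAcyclic → F' = F

/-- let `F` be a maximal induced forest, and let `S'` consist of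
all vertices of degree at least 2 in `G[F]` together with exactly one vertex of
each two-vertex component of `G[F]`. If `μ(𝒯) ≤ k`, then `|S' ∩ X_t| ≤ 8k`. -/
theorem stmt17 {V : Type} [Fintype V] (k : ℕ) (G : SimpleGraph V)
    (D : TreeDecomp G) (hmu : mu G D ≤ k) (t : D.ι)
    (F : Set V) (hF : IsMaximalInducedForest G F)
    (S' : Set V) (hS'F : S' ⊆ F)
    (hdeg : ∀ x : F, 2 ≤ ((G.induce F).neighborSet x).ncard → (x : V) ∈ S')
    (honly : ∀ x : F, (x : V) ∈ S' →
      2 ≤ ((G.induce F).neighborSet x).ncard ∨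
        ((G.induce F).connectedComponentMk x).supp.ncard = 2)
    (htwo : ∀ x : F, ((G.induce F).connectedComponentMk x).supp.ncard = 2 →
      ∃! y : F, y ∈ ((G.induce F).connectedComponentMk x).supp ∧ (y : V) ∈ S') :
    (S' ∩ D.bag t).ncard ≤ 8 * k := by
  classical
  have hac : (G.induce F).IsAcyclic := hF.1
  set S₀ : Set ↥F := {x | (x : V) ∈ S' ∩ D.bag t} with hS₀
  have hS : ∀ v ∈ S₀, 2 ≤ ((G.induce F).neighborSet v).ncard ∨
      (((G.induce F).connectedComponentMk v).supp.ncard = 2 ∧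
        ∀ u ∈ ((G.induce F).connectedComponentMk v).supp, u ∈ S₀ → u = v) := by
    intro v hv
    rcases honly v hv.1 with h | h
    · exact Or.inl h
    · refine Or.inr ⟨h, fun u hu hu2 => ?_⟩
      obtain ⟨y, _, hyu⟩ := htwo v h
      exact (hyu u ⟨hu, hu2.1⟩).trans (hyu v ⟨rfl, hv.1⟩).symm
  obtain ⟨M, hM1, hM2, hM3, hM4⟩ := forest_main hac S₀.ncard S₀ rfl hS
  set MV : Finset (V × V) := M.image (fun p => ((p.1 : V), (p.2 : V))) with hMV
  have hinj : Function.Injective (fun p : ↥F × ↥F => ((p.1 : V), (p.2 : V))) := by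
    intro p q h
    simp only [Prod.mk.injEq] at h
    exact Prod.ext (Subtype.coe_injective h.1) (Subtype.coe_injective h.2)
  have hcard : MV.card = M.card := Finset.card_image_of_injective _ hinj
  have hmatch : IsInducedMatching G MV := by
    constructor
    · intro p hp
      obtain ⟨p', hp', rfl⟩ := Finset.mem_image.mp hp
      exact hM1 p' hp'
    · intro p hp q hq hpq
      obtain ⟨p', hp', rfl⟩ := Finset.mem_image.mp hp
      obtain ⟨q', hq', rfl⟩ := Finset.mem_image.mp hq
      have hpq' : p' ≠ q' := fun h => hpq (by rw [h])
      obtain ⟨⟨n1, n2, n3, n4⟩, a1, a2, a3, a4⟩ := hM2 p' hp' q' hq' hpq'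
      exact ⟨⟨Subtype.coe_injective.ne n1, Subtype.coe_injective.ne n2,
        Subtype.coe_injective.ne n3, Subtype.coe_injective.ne n4⟩, a1, a2, a3, a4⟩
  have htouch : Touches MV (D.bag t) := by
    intro p hp
    obtain ⟨p', hp', rfl⟩ := Finset.mem_image.mp hp
    exact Or.inl ((hM3 p' hp').1.2)
  have hbdd : BddAbove {n | ∃ (s : D.ι) (M : Finset (V × V)),
      IsInducedMatching G M ∧ Touches M (D.bag s) ∧ M.card = n} := by
    refine ⟨Fintype.card (V × V), ?_⟩
    rintro n ⟨s, N, _, _, rfl⟩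
    exact Finset.card_le_univ N
  have hle : MV.card ≤ mu G D :=
    le_csSup hbdd ⟨t, MV, hmatch, htouch, rfl⟩
  have himg : Subtype.val '' S₀ = S' ∩ D.bag t := by
    ext x
    constructor
    · rintro ⟨y, hy, rfl⟩; exact hy
    · intro hx; exact ⟨⟨x, hS'F hx.1⟩, hx, rfl⟩
  have hSn : (S' ∩ D.bag t).ncard = S₀.ncard := by
    rw [← himg, Set.ncard_image_of_injective _ Subtype.coe_injective]
  omega


end Paper
end

section
/- Let k be a nonnegative integer, let G be a finite simple graph with n ≥ 1 vertices, let 𝒯 = (T, {X_t}) be a tree decomposition of G with μ(𝒯) ≤ k, and let t be a node of T. Then the number of distinct sets of the form I ∩ X_t, where I ranges over all inclusion-wise maximal independent sets of G, is at most n^{3k}. -/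
open SimpleGraph

namespace Paper

/-- `I` is an inclusion-wise maximal independent set of `G`. -/
def IsMaxIndep {V : Type} (G : SimpleGraph V) (I : Set V) : Prop :=
  (∀ u ∈ I, ∀ v ∈ I, u ≠ v → ¬ G.Adj u v) ∧
    ∀ I' : Set V, I ⊆ I' → (∀ u ∈ I', ∀ v ∈ I', u ≠ v → ¬ G.Adj u v) → I' = I


/-!
Fix the bag `X`. A maximal independent set `I` is an independent set dominating `X`, and the
traces on `X` of such sets are counted by recursion on `k`, shrinking the graph to an alive set
`W`. If `I` contains `X ∩ W`, its trace is `X ∩ W`. Otherwise one guesses a triple `(u, b, c)`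
with `u ∈ I` adjacent to `b ∈ X ∖ I`, where `b` has a minimum number of neighbours in `I` (or in
`I ∩ X`). Deleting the closed neighbourhoods of `u` and `b`, and the neighbours of `c`
in `X`, leaves an alive set in which every induced matching touching `X` extends by the edge
`ub`, so the budget drops to `k - 1`; by minimality of `b`, `I` still dominates what is left of
`X`, and the trace of `I` is recovered from the triple and its trace on the new alive set. Hence
`T(k) ≤ 1 + (n³ - 1) T(k - 1)`, so `T(k) ≤ n^(3k)`.
-/

lemma IsMaxIndep.exists_adj_of_notMem {V : Type} {G : SimpleGraph V} {I : Set V}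
    (hI : IsMaxIndep G I) {x : V} (hx : x ∉ I) : ∃ y ∈ I, G.Adj x y := by
  by_contra! h
  have hindep : ∀ u ∈ insert x I, ∀ v ∈ insert x I, u ≠ v → ¬G.Adj u v := by
    rintro u (rfl | hu) v (rfl | hv) huv
    · exact absurd rfl huv
    · exact h v hv
    · exact fun hadj => h u hu hadj.symm
    · exact hI.1 u hu v hv huv
  exact hx (hI.2 _ (Set.subset_insert x I) hindep ▸ Set.mem_insert x I)

lemma card_le_mu {V : Type} [Fintype V] {G : SimpleGraph V} (D : TreeDecomp G) {t : D.ι}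
    {M : Finset (V × V)} (hM : IsInducedMatching G M) (hMt : Touches M (D.bag t)) :
    M.card ≤ mu G D := by
  refine le_csSup ⟨Fintype.card (V × V), ?_⟩ ⟨t, M, hM, hMt, rfl⟩
  rintro _ ⟨-, M', -, -, rfl⟩
  exact M'.card_le_univ

section TraceCount

open Finset Classical

variable {V : Type} (G : SimpleGraph V)

def AwayFrom (u b x : V) : Prop :=
  x ≠ u ∧ x ≠ b ∧ ¬G.Adj u x ∧ ¬G.Adj b x

structure IndepDominates (X W J : Finset V) : Prop where
  subset : J ⊆ W
  indep : ∀ u ∈ J, ∀ v ∈ J, ¬G.Adj u v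
  dominates : ∀ x ∈ X ∩ W, x ∉ J → ∃ y ∈ J, G.Adj x y

def MatchingBounded (X W : Finset V) (k : ℕ) : Prop :=
  ∀ M : Finset (V × V), IsInducedMatching G M → (∀ p ∈ M, p.1 ∈ W ∧ p.2 ∈ W) →
    Touches M X → M.card ≤ k

noncomputable def residual (X W : Finset V) (u b c : V) : Finset V :=
  W.filter fun z => AwayFrom G u b z ∧ ¬(z ∈ X ∧ G.Adj c z)

noncomputable def recover (X W : Finset V) (u b c : V) (S : Finset V) : Finset V :=
  (X ∩ W).filter (fun v => v = u ∨
    (G.Adj b v ∧ ¬G.Adj u v ∧ ¬G.Adj c v ∧ ∀ y ∈ S, ¬G.Adj v y)) ∪ S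

/-- Conditions on `(u, b, c)` under which `J ∩ residual G X W u b c` still dominates the rest of
`X` and determines the trace `J ∩ X`. -/
structure IsSplitting (X W J : Finset V) (u b c : V) : Prop where
  u_mem : u ∈ J
  b_mem : b ∈ X ∩ W
  b_not_mem : b ∉ J
  adj : G.Adj u b
  c_not_adj : ∀ v ∈ J ∩ X, ¬G.Adj c v
  away_dominated : ∀ x ∈ X ∩ W, x ∉ J → AwayFrom G u b x → ¬G.Adj c x →
    ∃ y ∈ J, AwayFrom G u b y ∧ G.Adj x y
  nbr_dominated : ∀ v ∈ X ∩ W, v ∉ J → G.Adj b v → ¬G.Adj u v → ¬G.Adj c v →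
    ∃ y ∈ J ∩ X, AwayFrom G u b y ∧ G.Adj v y

variable {G}

lemma IsInducedMatching.insert {M : Finset (V × V)} {u b : V} (hM : IsInducedMatching G M)
    (hub : G.Adj u b) (hMaway : ∀ p ∈ M, AwayFrom G u b p.1 ∧ AwayFrom G u b p.2) :
    IsInducedMatching G (insert (u, b) M) := by
  refine ⟨?_, ?_⟩
  · simpa [hub] using hM.1
  · have key : ∀ p ∈ M, (u ≠ p.1 ∧ u ≠ p.2 ∧ b ≠ p.1 ∧ b ≠ p.2) ∧
        (¬G.Adj u p.1 ∧ ¬G.Adj u p.2 ∧ ¬G.Adj b p.1 ∧ ¬G.Adj b p.2) := by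
      intro p hp
      obtain ⟨⟨h1u, h1b, hu1, hb1⟩, ⟨h2u, h2b, hu2, hb2⟩⟩ := hMaway p hp
      exact ⟨⟨Ne.symm h1u, Ne.symm h2u, Ne.symm h1b, Ne.symm h2b⟩, hu1, hu2, hb1, hb2⟩
    simp only [mem_insert]
    rintro p (rfl | hp) q (rfl | hq) hpq
    · exact absurd rfl hpq
    · exact key q hq
    · obtain ⟨⟨h1, h2, h3, h4⟩, h5, h6, h7, h8⟩ := key p hp
      exact ⟨⟨Ne.symm h1, Ne.symm h3, Ne.symm h2, Ne.symm h4⟩,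
        fun h => h5 h.symm, fun h => h7 h.symm, fun h => h6 h.symm, fun h => h8 h.symm⟩
    · exact hM.2 p hp q hq hpq

lemma awayFrom_of_adj {J : Finset V} {u b x y : V} (hJ : ∀ v ∈ J, ∀ w ∈ J, ¬G.Adj v w)
    (hu : u ∈ J) (hbJ : b ∉ J) (hy : y ∈ J) (hxy : G.Adj x y) (hux : ¬G.Adj u x)
    (hby : ¬G.Adj b y) : AwayFrom G u b y :=
  ⟨by rintro rfl; exact hux hxy.symm, by rintro rfl; exact hbJ hy, hJ u hu y hy, hby⟩

lemma exists_away_nbr_of_card_le {A J : Finset V} {u b x : V} (hAJ : A ⊆ J)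
    (hJ : ∀ v ∈ J, ∀ w ∈ J, ¬G.Adj v w) (hbJ : b ∉ J) (hu : u ∈ A) (hbu : G.Adj b u)
    (hux : ¬G.Adj u x) (hcard : #(A.filter (G.Adj b)) ≤ #(A.filter (G.Adj x))) :
    ∃ y ∈ A, AwayFrom G u b y ∧ G.Adj x y := by
  by_contra! h
  have hsub : A.filter (G.Adj x) ⊆ A.filter (G.Adj b) := by
    intro y hy
    obtain ⟨hyA, hxy⟩ := mem_filter.mp hy
    refine mem_filter.mpr ⟨hyA, ?_⟩
    by_contra hby
    exact h y hyA (awayFrom_of_adj hJ (hAJ hu) hbJ (hAJ hyA) hxy hux hby) hxy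
  have hssub : A.filter (G.Adj x) ⊂ A.filter (G.Adj b) :=
    (ssubset_iff_of_subset hsub).mpr ⟨u, mem_filter.mpr ⟨hu, hbu⟩,
      fun hu' => hux (mem_filter.mp hu').2.symm⟩
  exact (card_lt_card hssub).not_ge hcard

lemma exists_isSplitting {X W J : Finset V} (hJ : IndepDominates G X W J) {b₀ : V}
    (hb₀ : b₀ ∈ X ∩ W) (hb₀J : b₀ ∉ J) : ∃ u b c, IsSplitting G X W J u b c := by
  set T := (X ∩ W) \ J
  have hT : ∀ {x}, x ∈ T ↔ x ∈ X ∩ W ∧ x ∉ J := mem_sdiff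
  by_cases hfree : ∃ x ∈ T, ∀ y ∈ J ∩ X, ¬G.Adj x y
  · -- `b` has no neighbour in `J ∩ X`, so `c := b` is harmless and kills `nbr_dominated`.
    set T₀ := T.filter fun x => ∀ y ∈ J ∩ X, ¬G.Adj x y
    obtain ⟨b, hbT₀, hbmin⟩ := exists_min_image T₀ (fun x => #(J.filter (G.Adj x)))
      (by simpa [T₀, Finset.Nonempty] using hfree)
    obtain ⟨hbT, hbfree⟩ := mem_filter.mp hbT₀
    obtain ⟨hb, hbJ⟩ := hT.mp hbT
    obtain ⟨u, huJ, hbu⟩ := hJ.dominates b hb hbJ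
    refine ⟨u, b, b, ⟨huJ, hb, hbJ, hbu.symm, hbfree, ?_, fun _ _ _ hbv _ hbv' => absurd hbv hbv'⟩⟩
    intro x hx hxJ hxa _
    by_cases hxfree : ∀ y ∈ J ∩ X, ¬G.Adj x y
    · exact exists_away_nbr_of_card_le subset_rfl hJ.indep hbJ huJ hbu hxa.2.2.1
        (hbmin x (mem_filter.mpr ⟨hT.mpr ⟨hx, hxJ⟩, hxfree⟩))
    · push Not at hxfree
      obtain ⟨y, hy, hxy⟩ := hxfree
      have hyJ := (mem_inter.mp hy).1
      exact ⟨y, hyJ, awayFrom_of_adj hJ.indep huJ hbJ hyJ hxy hxa.2.2.1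
        (hbfree y hy), hxy⟩
  · -- Every vertex of `T` has a neighbour in `J ∩ X`; `c := u` is harmless as `J` is independent.
    push Not at hfree
    obtain ⟨b, hbT, hbmin⟩ := exists_min_image T (fun x => #((J ∩ X).filter (G.Adj x)))
      ⟨b₀, hT.mpr ⟨hb₀, hb₀J⟩⟩
    obtain ⟨hb, hbJ⟩ := hT.mp hbT
    obtain ⟨u, hu, hbu⟩ := hfree b hbT
    have huJ := (mem_inter.mp hu).1
    have away := fun {x} (hxT : x ∈ T) (hux : ¬G.Adj u x) =>
      exists_away_nbr_of_card_le inter_subset_left hJ.indep hbJ hu hbu hux (hbmin x hxT)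
    refine ⟨u, b, u, ⟨huJ, hb, hbJ, hbu.symm, fun v hv => hJ.indep u huJ v (mem_inter.mp hv).1,
      ?_, ?_⟩⟩
    · intro x hx hxJ _ hux
      obtain ⟨y, hy, hya, hxy⟩ := away (hT.mpr ⟨hx, hxJ⟩) hux
      exact ⟨y, (mem_inter.mp hy).1, hya, hxy⟩
    · intro v hv hvJ _ huv _
      exact away (hT.mpr ⟨hv, hvJ⟩) huv

lemma IsSplitting.mem_residual {X W J : Finset V} {u b c y : V}
    (hs : IsSplitting G X W J u b c) (hJW : J ⊆ W) (hy : y ∈ J) (hay : AwayFrom G u b y) :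
    y ∈ residual G X W u b c :=
  mem_filter.mpr ⟨hJW hy, hay, fun hyc => hs.c_not_adj y (mem_inter.mpr ⟨hy, hyc.1⟩) hyc.2⟩

lemma IsSplitting.indepDominates_residual {X W J : Finset V} {u b c : V}
    (hs : IsSplitting G X W J u b c) (hJ : IndepDominates G X W J) :
    IndepDominates G X (residual G X W u b c) (J ∩ residual G X W u b c) where
  subset := inter_subset_right
  indep v hv w hw := hJ.indep v (mem_inter.mp hv).1 w (mem_inter.mp hw).1
  dominates x hx hxJ := by
    obtain ⟨hxX, hxR⟩ := mem_inter.mp hx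
    obtain ⟨hxW, hxa, hxc⟩ := mem_filter.mp hxR
    obtain ⟨y, hyJ, hya, hxy⟩ := hs.away_dominated x (mem_inter.mpr ⟨hxX, hxW⟩)
      (fun h => hxJ (mem_inter.mpr ⟨h, hxR⟩)) hxa (fun h => hxc ⟨hxX, h⟩)
    exact ⟨y, mem_inter.mpr ⟨hyJ, hs.mem_residual hJ.subset hyJ hya⟩, hxy⟩

lemma IsSplitting.recover_eq {X W J : Finset V} {u b c : V}
    (hs : IsSplitting G X W J u b c) (hJ : IndepDominates G X W J) :
    recover G X W u b c (J ∩ residual G X W u b c ∩ X) = J ∩ X := by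
  ext v
  simp only [recover, mem_union, mem_filter, mem_inter]
  constructor
  · rintro (⟨⟨hvX, hvW⟩, rfl | ⟨hbv, huv, hcv, hvS⟩⟩ | ⟨⟨hvJ, -⟩, hvX⟩)
    · exact ⟨hs.u_mem, hvX⟩
    · refine ⟨?_, hvX⟩
      by_contra hvJ
      obtain ⟨y, hy, hya, hvy⟩ :=
        hs.nbr_dominated v (mem_inter.mpr ⟨hvX, hvW⟩) hvJ hbv huv hcv
      obtain ⟨hyJ, hyX⟩ := mem_inter.mp hy
      exact hvS y ⟨⟨hyJ, hs.mem_residual hJ.subset hyJ hya⟩, hyX⟩ hvy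
    · exact ⟨hvJ, hvX⟩
  · rintro ⟨hvJ, hvX⟩
    by_cases hvR : v ∈ residual G X W u b c
    · exact Or.inr ⟨⟨hvJ, hvR⟩, hvX⟩
    refine Or.inl ⟨⟨hvX, hJ.subset hvJ⟩, ?_⟩
    have hcv : ¬G.Adj c v := hs.c_not_adj v (mem_inter.mpr ⟨hvJ, hvX⟩)
    have huv : ¬G.Adj u v := hJ.indep u hs.u_mem v hvJ
    by_cases hvu : v = u
    · exact Or.inl hvu
    refine Or.inr ⟨?_, huv, hcv, fun y hy => hJ.indep v hvJ y hy.1.1⟩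
    by_contra hbv
    have hvb : v ≠ b := fun h => hs.b_not_mem (h ▸ hvJ)
    exact hvR (hs.mem_residual hJ.subset hvJ ⟨hvu, hvb, huv, hbv⟩)

variable (G) [Fintype V]

noncomputable def traces (X W : Finset V) : Finset (Finset V) :=
  univ.filter fun S => ∃ J, IndepDominates G X W J ∧ S = J ∩ X

noncomputable def splitTriples (X W : Finset V) : Finset (V × V × V) :=
  univ.filter fun p => G.Adj p.1 p.2.1 ∧ p.2.1 ∈ X ∧ p.1 ∈ W ∧ p.2.1 ∈ W

variable {G}

lemma MatchingBounded.card_add_one_le {X W : Finset V} {k : ℕ} {p : V × V × V}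
    (h : MatchingBounded G X W k) (hp : p ∈ splitTriples G X W) {M : Finset (V × V)}
    (hM : IsInducedMatching G M)
    (hMW : ∀ q ∈ M, q.1 ∈ residual G X W p.1 p.2.1 p.2.2 ∧ q.2 ∈ residual G X W p.1 p.2.1 p.2.2)
    (hMX : Touches M X) : M.card + 1 ≤ k := by
  obtain ⟨u, b, c⟩ := p
  simp only [splitTriples, mem_filter, mem_univ, true_and] at hp
  obtain ⟨hub, hbX, huW, hbW⟩ := hp
  have hres : ∀ z ∈ residual G X W u b c, z ∈ W ∧ AwayFrom G u b z := fun z hz =>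
    ⟨(mem_filter.mp hz).1, (mem_filter.mp hz).2.1⟩
  have hnot : (u, b) ∉ M := fun h => (hres u (hMW _ h).1).2.1 rfl
  rw [← card_insert_of_notMem hnot]
  refine h _ (hM.insert hub fun q hq => ⟨(hres _ (hMW q hq).1).2, (hres _ (hMW q hq).2).2⟩)
    ?_ ?_
  · simp only [mem_insert, forall_eq_or_imp]
    exact ⟨⟨huW, hbW⟩, fun q hq => ⟨(hres _ (hMW q hq).1).1, (hres _ (hMW q hq).2).1⟩⟩
  · simp only [Touches, mem_insert, forall_eq_or_imp]
    exact ⟨Or.inr hbX, hMX⟩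

lemma MatchingBounded.residual {X W : Finset V} {k : ℕ} {p : V × V × V}
    (h : MatchingBounded G X W (k + 1)) (hp : p ∈ splitTriples G X W) :
    MatchingBounded G X (residual G X W p.1 p.2.1 p.2.2) k := fun M hM hMW hMX => by
  have := h.card_add_one_le hp hM hMW hMX
  omega

lemma MatchingBounded.splitTriples_eq_empty {X W : Finset V} (h : MatchingBounded G X W 0) :
    splitTriples G X W = ∅ :=
  eq_empty_of_forall_notMem fun _ hp =>
    absurd (h.card_add_one_le hp (M := ∅) ⟨by simp, by simp⟩ (by simp) (by simp [Touches]))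
      (by simp)

lemma card_splitTriples_lt [Nonempty V] (X W : Finset V) :
    #(splitTriples G X W) < Fintype.card V ^ 3 := by
  obtain ⟨v⟩ := ‹Nonempty V›
  have hv : (v, v, v) ∉ splitTriples G X W := by simp [splitTriples]
  calc #(splitTriples G X W) < #(univ : Finset (V × V × V)) := card_lt_univ_of_notMem hv
    _ = Fintype.card V ^ 3 := by simp [Fintype.card_prod, pow_succ, mul_assoc]

lemma traces_subset (X W : Finset V) :
    traces G X W ⊆ insert (X ∩ W) ((splitTriples G X W).biUnion fun p =>
      (traces G X (residual G X W p.1 p.2.1 p.2.2)).image (recover G X W p.1 p.2.1 p.2.2)) := by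
  intro S hS
  obtain ⟨J, hJ, rfl⟩ := (mem_filter.mp hS).2
  by_cases hXJ : X ∩ W ⊆ J
  · have : J ∩ X = X ∩ W := by
      ext v
      simp only [mem_inter]
      exact ⟨fun h => ⟨h.2, hJ.subset h.1⟩, fun h => ⟨hXJ (mem_inter.mpr h), h.1⟩⟩
    exact this ▸ mem_insert_self _ _
  obtain ⟨b₀, hb₀, hb₀J⟩ := not_subset.mp hXJ
  obtain ⟨u, b, c, hs⟩ := exists_isSplitting hJ hb₀ hb₀J
  obtain ⟨hbX, hbW⟩ := mem_inter.mp hs.b_mem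
  refine mem_insert_of_mem <|
    mem_biUnion.mpr ⟨(u, b, c), ?_, mem_image.mpr ⟨_, ?_, hs.recover_eq hJ⟩⟩
  · simpa [splitTriples] using ⟨hs.adj, hbX, hJ.subset hs.u_mem, hbW⟩
  · exact mem_filter.mpr ⟨mem_univ _, _, hs.indepDominates_residual hJ, rfl⟩

theorem card_traces_le [Nonempty V] (X : Finset V) :
    ∀ (k : ℕ) (W : Finset V), MatchingBounded G X W k →
      #(traces G X W) ≤ Fintype.card V ^ (3 * k)
  | 0, W, h => by
    simpa [h.splitTriples_eq_empty] using card_le_card (traces_subset (G := G) X W)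
  | k + 1, W, h => by
    set n := Fintype.card V
    calc #(traces G X W)
        ≤ ∑ p ∈ splitTriples G X W, #(traces G X (residual G X W p.1 p.2.1 p.2.2)) + 1 := by
          refine (card_le_card (traces_subset (G := G) X W)).trans ((card_insert_le _ _).trans ?_)
          gcongr
          exact card_biUnion_le.trans (sum_le_sum fun p _ => card_image_le)
      _ ≤ #(splitTriples G X W) * n ^ (3 * k) + n ^ (3 * k) := by
          gcongr
          · simpa using sum_le_card_nsmul _ _ _ fun p hp => card_traces_le X k _ (h.residual hp)
          · exact Nat.one_le_pow _ _ Fintype.card_pos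
      _ ≤ n ^ 3 * n ^ (3 * k) := by
          rw [← Nat.succ_mul]
          gcongr
          exact card_splitTriples_lt X W
      _ = n ^ (3 * (k + 1)) := by ring

lemma IsMaxIndep.indepDominates {I : Set V} (hI : IsMaxIndep G I) (X : Finset V) :
    IndepDominates G X univ I.toFinset where
  subset := subset_univ _
  indep u hu v hv huv := by
    rw [Set.mem_toFinset] at hu hv
    obtain rfl | hne := eq_or_ne u v
    · exact G.irrefl huv
    · exact hI.1 u hu v hv hne huv
  dominates x _ hx := by
    simpa using hI.exists_adj_of_notMem (by simpa using hx)

end TraceCount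

/-- if `μ(𝒯) ≤ k`, then the number of distinct traces `I ∩ X_t`
of maximal independent sets `I` on a bag `X_t` is at most `n^(3k)`. -/
theorem stmt18 {V : Type} [Fintype V] [Nonempty V] (k : ℕ) (G : SimpleGraph V)
    (D : TreeDecomp G) (hmu : mu G D ≤ k) (t : D.ι) :
    {S : Set V | ∃ I : Set V, IsMaxIndep G I ∧ S = I ∩ D.bag t}.ncard ≤
      Fintype.card V ^ (3 * k) := by
  classical
  set X := (D.bag t).toFinset
  have hbound : MatchingBounded G X Finset.univ k := fun M hM _ hMX =>
    (card_le_mu D hM (by simpa [X] using hMX)).trans hmu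
  have hsub : {S : Set V | ∃ I : Set V, IsMaxIndep G I ∧ S = I ∩ D.bag t} ⊆
      (↑) '' (traces G X Finset.univ : Set (Finset V)) := by
    rintro _ ⟨I, hI, rfl⟩
    exact ⟨I.toFinset ∩ X, Finset.mem_filter.mpr ⟨Finset.mem_univ _, _, hI.indepDominates X, rfl⟩,
      by simp [X]⟩
  calc _ ≤ ((↑) '' (traces G X Finset.univ : Set (Finset V))).ncard := Set.ncard_le_ncard hsub
    _ ≤ (traces G X Finset.univ).card := (Set.ncard_image_le (Finset.finite_toSet _)).trans
        (Set.ncard_coe_finset _).le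
    _ ≤ _ := card_traces_le X k _ hbound

end Paper
end
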